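/- arXiv:2303.03465 — 4 statements merged into one kernel-verified Lean document; each statement's English description precedes it below -/
import Mathlib

section
/- Let m, n₁, n₂ ≥ 1. Let ρ be a density matrix on ℂ^{n₁} ⊗ ℂ^{n₂}, let ρ_E be a density matrix on ℂ^{m}, let V be a unitary matrix on ℂ^{m} ⊗ ℂ^{n₁}, and let U₁ ∈ M_{n₁}(ℂ), U₂ ∈ M_{n₂}(ℂ) be unitary, with U = U₁ ⊗ U₂. Then Tr₁( U · Tr_E[ (V ⊗ I_{n₂})(ρ_E ⊗ ρ)(V* ⊗ I_{n₂}) ] · U* ) = Tr₁( U ρ U* ), where Tr_E denotes the partial trace over the ℂ^{m} factor of ℂ^{m} ⊗ ℂ^{n₁} ⊗ ℂ^{n₂} and Tr₁ the partial trace over the ℂ^{n₁} factor of ℂ^{n₁} ⊗ ℂ^{n₂}. (This is the paper's proof that the factorization property (F) implies the consistency condition (C): an arbitrary physical evolution of the first subsystem, realized by coupling it unitarily to an environment, leaves invariant the reduced state, hence the measurement statistics, of the second subsystem.) -/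
open Matrix Kronecker BigOperators
open scoped ComplexOrder

/-- Partial trace over the first tensor factor:
the unique linear map with `ptraceFst (A ⊗ₖ B) = Tr(A) • B`. -/
noncomputable def ptraceFst {α β : Type*} [Fintype α] [Fintype β]
    (A : Matrix (α × β) (α × β) ℂ) : Matrix β β ℂ :=
  fun i j => ∑ k : α, A (k, i) (k, j)

lemma unitary_delta {α : Type*} [Fintype α] [DecidableEq α] (A : Matrix α α ℂ)
    (hA : A ∈ Matrix.unitaryGroup α ℂ) (a c : α) :
    ∑ k, A k a * (starRingEnd ℂ) (A k c) = if c = a then 1 else 0 := by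
  have h := Matrix.mem_unitaryGroup_iff'.mp hA
  have := congrFun (congrFun h c) a
  simpa [Matrix.mul_apply, Matrix.one_apply, Matrix.star_apply, mul_comm] using this

lemma sum4_comm {γ α : Type*} [Fintype γ] [Fintype α] (F : γ → α → γ → α → ℂ) :
    (∑ e : γ, ∑ k : α, ∑ f : γ, ∑ c : α, F e k f c)
      = ∑ f : γ, ∑ c : α, ∑ e : γ, ∑ k : α, F e k f c := by
  trans ∑ e : γ, ∑ f : γ, ∑ c : α, ∑ k : α, F e k f c
  · refine Finset.sum_congr rfl fun e _ => ?_
    rw [Finset.sum_comm]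
    exact Finset.sum_congr rfl fun f _ => by rw [Finset.sum_comm]
  · rw [Finset.sum_comm]
    exact Finset.sum_congr rfl fun f _ => by rw [Finset.sum_comm]

lemma env_trace {γ α β : Type*} [Fintype γ] [DecidableEq γ] [Fintype α] [DecidableEq α]
    [Fintype β] [DecidableEq β]
    (V : Matrix (γ × α) (γ × α) ℂ) (hV : V ∈ Matrix.unitaryGroup (γ × α) ℂ)
    (ρE : Matrix γ γ ℂ) (hρEtr : ρE.trace = 1)
    (ρ : Matrix (α × β) (α × β) ℂ) :
    ptraceFst (ptraceFst
      ((Matrix.reindex (Equiv.prodAssoc γ α β) (Equiv.prodAssoc γ α β)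
          (V ⊗ₖ (1 : Matrix β β ℂ))) * (ρE ⊗ₖ ρ) *
        (Matrix.reindex (Equiv.prodAssoc γ α β) (Equiv.prodAssoc γ α β)
          (V ⊗ₖ (1 : Matrix β β ℂ)))ᴴ)) = ptraceFst ρ := by
  have delta2 : ∀ q q' : γ × α,
      (∑ e : γ, ∑ k : α, V (e, k) q * (starRingEnd ℂ) (V (e, k) q'))
        = if q' = q then 1 else 0 := by
    intro q q'
    have h := unitary_delta V hV q q'
    rwa [Fintype.sum_prod_type] at h
  funext i j
  simp only [ptraceFst, Matrix.mul_apply, Matrix.conjTranspose_apply, Matrix.reindex_apply,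
    Matrix.submatrix_apply, Equiv.prodAssoc_symm_apply, Matrix.kroneckerMap_apply,
    Matrix.one_apply, Fintype.sum_prod_type, mul_ite, mul_zero, mul_one, ite_mul, zero_mul,
    Finset.sum_ite_eq, Finset.sum_ite_eq', Finset.mem_univ, if_true, star_mul',
    apply_ite (star : ℂ → ℂ), star_zero, star_one]
  rw [Finset.sum_comm]
  rw [sum4_comm (fun e k f' c' =>
    (∑ f : γ, ∑ c : α, V (e, k) (f, c) * (ρE f f' * ρ (c, i) (c', j))) *
      star (V (e, k) (f', c')))]
  trans ∑ f' : γ, ∑ c' : α, ∑ f : γ, ∑ c : α, (ρE f f' * ρ (c, i) (c', j)) *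
      ∑ e : γ, ∑ k : α, V (e, k) (f, c) * (starRingEnd ℂ) (V (e, k) (f', c'))
  · refine Finset.sum_congr rfl fun f' _ => Finset.sum_congr rfl fun c' _ => ?_
    simp only [Finset.sum_mul]
    rw [sum4_comm (fun e k f c =>
      V (e, k) (f, c) * (ρE f f' * ρ (c, i) (c', j)) * star (V (e, k) (f', c')))]
    refine Finset.sum_congr rfl fun f _ => Finset.sum_congr rfl fun c _ => ?_
    simp only [Finset.mul_sum]
    exact Finset.sum_congr rfl fun e _ => Finset.sum_congr rfl fun k _ => by
      simp only [Complex.star_def]; ring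
  · simp only [delta2, Prod.mk.injEq, ite_and, mul_ite, mul_one, mul_zero,
      Finset.sum_ite_eq, Finset.sum_ite_eq', Finset.mem_univ, if_true,
      Finset.sum_const_zero, Finset.sum_ite_irrel]
    rw [Finset.sum_comm]
    refine Finset.sum_congr rfl fun c _ => ?_
    rw [← Finset.sum_mul]
    have h1 : (∑ f : γ, ρE f f) = 1 := by
      simpa [Matrix.trace, Matrix.diag] using hρEtr
    rw [h1, one_mul]

lemma ptraceFst_conj_kron {α β : Type*} [Fintype α] [DecidableEq α] [Fintype β] [DecidableEq β]
    (U₁ : Matrix α α ℂ) (hU₁ : U₁ ∈ Matrix.unitaryGroup α ℂ) (U₂ : Matrix β β ℂ)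
    (σ : Matrix (α × β) (α × β) ℂ) :
    ptraceFst ((U₁ ⊗ₖ U₂) * σ * (U₁ ⊗ₖ U₂)ᴴ) = U₂ * ptraceFst σ * U₂ᴴ := by
  funext i j
  simp only [ptraceFst, Matrix.mul_apply, Matrix.conjTranspose_apply,
    Matrix.kroneckerMap_apply, Fintype.sum_prod_type, Finset.sum_mul, Finset.mul_sum,
    star_mul']
  trans ∑ c : α, ∑ d : β, ∑ b : β, U₂ i b * σ (c, b) (c, d) * star (U₂ j d)
  · rw [Finset.sum_comm]
    refine Finset.sum_congr rfl fun c _ => ?_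
    rw [Finset.sum_comm]
    refine Finset.sum_congr rfl fun d _ => ?_
    rw [Finset.sum_comm]
    trans ∑ a : α, (∑ k : α, U₁ k a * (starRingEnd ℂ) (U₁ k c)) *
        (∑ b : β, U₂ i b * σ (a, b) (c, d) * star (U₂ j d))
    · refine Finset.sum_congr rfl fun a _ => ?_
      rw [Finset.sum_mul_sum]
      exact Finset.sum_congr rfl fun k _ => Finset.sum_congr rfl fun b _ => by
        simp only [Complex.star_def]; ring
    · simp [unitary_delta U₁ hU₁, ite_mul]
  · rw [Finset.sum_comm]
    refine Finset.sum_congr rfl fun d _ => ?_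
    rw [Finset.sum_comm]

/-- (F) ⇒ (C): any physical evolution of the first subsystem, realized by coupling it
unitarily to an environment `ℂ^m` via `V ⊗ I`, leaves invariant the reduced state of the
second subsystem after the factorized evolution `U = U₁ ⊗ U₂` of the spacelike separated
pair. -/
theorem factorization_implies_consistency (m n₁ n₂ : ℕ)
    (hm : 1 ≤ m) (hn₁ : 1 ≤ n₁) (hn₂ : 1 ≤ n₂)
    (ρ : Matrix (Fin n₁ × Fin n₂) (Fin n₁ × Fin n₂) ℂ)
    (hρ : ρ.PosSemidef) (hρtr : ρ.trace = 1)
    (ρE : Matrix (Fin m) (Fin m) ℂ) (hρE : ρE.PosSemidef) (hρEtr : ρE.trace = 1)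
    (V : Matrix (Fin m × Fin n₁) (Fin m × Fin n₁) ℂ)
    (hV : V ∈ Matrix.unitaryGroup (Fin m × Fin n₁) ℂ)
    (U₁ : Matrix (Fin n₁) (Fin n₁) ℂ) (hU₁ : U₁ ∈ Matrix.unitaryGroup (Fin n₁) ℂ)
    (U₂ : Matrix (Fin n₂) (Fin n₂) ℂ) (hU₂ : U₂ ∈ Matrix.unitaryGroup (Fin n₂) ℂ)
    (U : Matrix (Fin n₁ × Fin n₂) (Fin n₁ × Fin n₂) ℂ) (hU : U = U₁ ⊗ₖ U₂)
    (Vbig : Matrix (Fin m × Fin n₁ × Fin n₂) (Fin m × Fin n₁ × Fin n₂) ℂ)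
    (hVbig : Vbig = Matrix.reindex (Equiv.prodAssoc (Fin m) (Fin n₁) (Fin n₂))
      (Equiv.prodAssoc (Fin m) (Fin n₁) (Fin n₂))
      (V ⊗ₖ (1 : Matrix (Fin n₂) (Fin n₂) ℂ))) :
    ptraceFst (U * ptraceFst (Vbig * (ρE ⊗ₖ ρ) * Vbigᴴ) * Uᴴ)
      = ptraceFst (U * ρ * Uᴴ) := by
  subst hU hVbig
  rw [ptraceFst_conj_kron U₁ hU₁ U₂, ptraceFst_conj_kron U₁ hU₁ U₂,
    env_trace V hV ρE hρEtr ρ]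
end

section
/- Let n₁, n₂ ≥ 1, let ρ be a density matrix on ℂ^{n₁} ⊗ ℂ^{n₂}, and let (K_i)_{i∈F} be a finite family of matrices in M_{n₁}(ℂ) with Σ_{i∈F} K_i* K_i = I_{n₁}. Then Tr₁( Σ_{i∈F} (K_i ⊗ I_{n₂}) ρ (K_i* ⊗ I_{n₂}) ) = Tr₁(ρ). In particular, no quantum operation applied locally to the first subsystem of an entangled pair can change the reduced state, and hence the outcome statistics of any measurement, of the second subsystem (the no-communication theorem). -/
open Matrix Kronecker BigOperators
open scoped ComplexOrder

noncomputable def trFst {n₁ n₂ : ℕ} (A : Matrix (Fin n₁ × Fin n₂) (Fin n₁ × Fin n₂) ℂ) :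
    Matrix (Fin n₂) (Fin n₂) ℂ :=
  fun i j => ∑ k : Fin n₁, A (k, i) (k, j)

/-- The no-communication theorem: a quantum operation (given by Kraus operators
`(K_i)` with `Σ K_i* K_i = 1`) applied locally to the first subsystem does not change
the reduced state of the second subsystem. -/
theorem no_communication (n₁ n₂ : ℕ) (hn₁ : 1 ≤ n₁) (hn₂ : 1 ≤ n₂)
    (ρ : Matrix (Fin n₁ × Fin n₂) (Fin n₁ × Fin n₂) ℂ)
    (hρ : ρ.PosSemidef) (hρtr : ρ.trace = 1)
    (ι : Type) [Fintype ι] (K : ι → Matrix (Fin n₁) (Fin n₁) ℂ)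
    (hK : (∑ i, (K i)ᴴ * K i) = 1) :
    trFst (∑ i, (K i ⊗ₖ (1 : Matrix (Fin n₂) (Fin n₂) ℂ)) * ρ *
        ((K i)ᴴ ⊗ₖ (1 : Matrix (Fin n₂) (Fin n₂) ℂ)))
      = trFst ρ := by
  have key : ∀ a b : Fin n₁, (∑ i, ∑ k, (starRingEnd ℂ) (K i k a) * K i k b)
      = if a = b then 1 else 0 := by
    intro a b
    have := congrFun (congrFun hK a) b
    simpa [Matrix.sum_apply, Matrix.mul_apply, Matrix.one_apply, Matrix.conjTranspose_apply,
      mul_comm] using this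
  funext i j
  simp only [trFst, Matrix.sum_apply, Matrix.mul_apply, kroneckerMap_apply,
    Matrix.one_apply, Matrix.conjTranspose_apply, Fintype.sum_prod_type]
  simp only [mul_ite, ite_mul, mul_one, mul_zero, zero_mul, one_mul,
    Finset.sum_ite_eq, Finset.sum_ite_eq', Finset.mem_univ, if_true]
  rw [Finset.sum_comm]
  have L : ∀ y : ι, (∑ x : Fin n₁, ∑ x1 : Fin n₁,
      (∑ x2 : Fin n₁, K y x x2 * ρ (x2, i) (x1, j)) * star (K y x x1))
      = ∑ x1 : Fin n₁, ∑ x2 : Fin n₁,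
        (∑ x : Fin n₁, (starRingEnd ℂ) (K y x x1) * K y x x2) * ρ (x2, i) (x1, j) := by
    intro y
    rw [Finset.sum_comm]
    refine Finset.sum_congr rfl fun x1 _ => ?_
    simp only [Finset.sum_mul, Finset.mul_sum]
    rw [Finset.sum_comm]
    refine Finset.sum_congr rfl fun x2 _ => Finset.sum_congr rfl fun x _ => ?_
    rw [Complex.star_def]; ring
  calc (∑ y : ι, ∑ x : Fin n₁, ∑ x1 : Fin n₁,
        (∑ x2 : Fin n₁, K y x x2 * ρ (x2, i) (x1, j)) * star (K y x x1))
      = ∑ y : ι, ∑ x1 : Fin n₁, ∑ x2 : Fin n₁,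
        (∑ x : Fin n₁, (starRingEnd ℂ) (K y x x1) * K y x x2) * ρ (x2, i) (x1, j) :=
        Finset.sum_congr rfl fun y _ => L y
    _ = ∑ x1 : Fin n₁, ∑ x2 : Fin n₁,
        (∑ y : ι, ∑ x : Fin n₁, (starRingEnd ℂ) (K y x x1) * K y x x2) * ρ (x2, i) (x1, j) := by
        rw [Finset.sum_comm]
        refine Finset.sum_congr rfl fun x1 _ => ?_
        rw [Finset.sum_comm]
        refine Finset.sum_congr rfl fun x2 _ => ?_
        rw [Finset.sum_mul]
    _ = ∑ k : Fin n₁, ρ (k, i) (k, j) := by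
        simp only [key]
        simp [ite_mul, eq_comm]
end

section
/- Let n₁, n₂ ≥ 1, let H ∈ M_{n₁·n₂}(ℂ), and let U₁ : ℝ → M_{n₁}(ℂ), U₂ : ℝ → M_{n₂}(ℂ) be functions differentiable at 0 with U₁(0) = I_{n₁} and U₂(0) = I_{n₂}. If exp(t·H) = U₁(t) ⊗ U₂(t) for all t ∈ ℝ, then H = H₁ ⊗ I_{n₂} + I_{n₁} ⊗ H₂, where H₁ = U₁′(0) and H₂ = U₂′(0). (The implication (F) ⇒ (L): if the joint unitary evolution of two systems factorizes at all times, the total Hamiltonian is a Kronecker sum, i.e., the interaction Hamiltonian vanishes.) -/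
open Matrix Kronecker

open scoped Matrix.Norms.Operator in
theorem Matrix.hasDerivAt_exp_smul_apply_zero {𝕂 m 𝔸 : Type*} [RCLike 𝕂] [Fintype m]
    [DecidableEq m] [NormedRing 𝔸] [NormedAlgebra 𝕂 𝔸] [CompleteSpace 𝔸]
    (A : Matrix m m 𝔸) (i j : m) :
    HasDerivAt (fun t : 𝕂 => NormedSpace.exp (t • A) i j) (A i j) 0 := by
  -- the operator norm induces the entrywise uniformity, for which completeness is known
  have : @CompleteSpace (Matrix m m 𝔸) PseudoMetricSpace.toUniformSpace :=
    Matrix.instCompleteSpace m m 𝔸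
  have hexp := hasDerivAt_exp_smul_const (𝕂 := 𝕂) A 0
  rw [zero_smul, NormedSpace.exp_zero, one_mul] at hexp
  exact hasDerivAt_pi.1 (hasDerivAt_pi.1 hexp i) j

theorem Matrix.hasDerivAt_kronecker_apply {𝕜 𝔸 m n p q : Type*} [NontriviallyNormedField 𝕜]
    [NormedCommRing 𝔸] [NormedAlgebra 𝕜 𝔸] {U₁ : 𝕜 → Matrix m n 𝔸} {U₂ : 𝕜 → Matrix p q 𝔸}
    {H₁ : Matrix m n 𝔸} {H₂ : Matrix p q 𝔸} {t₀ : 𝕜}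
    (hU₁ : ∀ i j, HasDerivAt (fun t => U₁ t i j) (H₁ i j) t₀)
    (hU₂ : ∀ i j, HasDerivAt (fun t => U₂ t i j) (H₂ i j) t₀) (ik : m × p) (jl : n × q) :
    HasDerivAt (fun t => (U₁ t ⊗ₖ U₂ t) ik jl) ((H₁ ⊗ₖ U₂ t₀ + U₁ t₀ ⊗ₖ H₂) ik jl) t₀ :=
  (hU₁ ik.1 jl.1).mul (hU₂ ik.2 jl.2)

theorem factorized_evolution_implies_kronecker_sum_general (n₁ n₂ : ℕ)
    (H : Matrix (Fin n₁ × Fin n₂) (Fin n₁ × Fin n₂) ℂ)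
    (U₁ : ℝ → Matrix (Fin n₁) (Fin n₁) ℂ) (U₂ : ℝ → Matrix (Fin n₂) (Fin n₂) ℂ)
    (hU₁0 : U₁ 0 = 1) (hU₂0 : U₂ 0 = 1)
    (H₁ : Matrix (Fin n₁) (Fin n₁) ℂ) (H₂ : Matrix (Fin n₂) (Fin n₂) ℂ)
    (hU₁' : ∀ i j, HasDerivAt (fun t => U₁ t i j) (H₁ i j) 0)
    (hU₂' : ∀ i j, HasDerivAt (fun t => U₂ t i j) (H₂ i j) 0)
    (hfact : ∀ t : ℝ, NormedSpace.exp (t • H) = U₁ t ⊗ₖ U₂ t) :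
    H = H₁ ⊗ₖ (1 : Matrix (Fin n₂) (Fin n₂) ℂ)
      + (1 : Matrix (Fin n₁) (Fin n₁) ℂ) ⊗ₖ H₂ := by
  ext ik jl
  have hH : HasDerivAt (fun t : ℝ => (U₁ t ⊗ₖ U₂ t) ik jl) (H ik jl) 0 := by
    simpa only [hfact] using hasDerivAt_exp_smul_apply_zero (𝕂 := ℝ) H ik jl
  simpa only [hU₁0, hU₂0] using hH.unique (hasDerivAt_kronecker_apply hU₁' hU₂' ik jl)

/-- (F) ⇒ (L): if the joint evolution `exp(t H)` factorizes as `U₁(t) ⊗ U₂(t)` for all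
times `t`, with `U₁, U₂` differentiable at `0` and equal to the identity at `0`, then the
Hamiltonian is the Kronecker sum `H = H₁ ⊗ I + I ⊗ H₂` where `Hᵢ = Uᵢ′(0)`,
i.e. the interaction Hamiltonian vanishes. -/
theorem factorized_evolution_implies_kronecker_sum (n₁ n₂ : ℕ) (hn₁ : 1 ≤ n₁) (hn₂ : 1 ≤ n₂)
    (H : Matrix (Fin n₁ × Fin n₂) (Fin n₁ × Fin n₂) ℂ)
    (U₁ : ℝ → Matrix (Fin n₁) (Fin n₁) ℂ) (U₂ : ℝ → Matrix (Fin n₂) (Fin n₂) ℂ)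
    (hU₁0 : U₁ 0 = 1) (hU₂0 : U₂ 0 = 1)
    (H₁ : Matrix (Fin n₁) (Fin n₁) ℂ) (H₂ : Matrix (Fin n₂) (Fin n₂) ℂ)
    (hU₁' : ∀ i j, HasDerivAt (fun t => U₁ t i j) (H₁ i j) 0)
    (hU₂' : ∀ i j, HasDerivAt (fun t => U₂ t i j) (H₂ i j) 0)
    (hfact : ∀ t : ℝ, NormedSpace.exp (t • H) = U₁ t ⊗ₖ U₂ t) :
    H = H₁ ⊗ₖ (1 : Matrix (Fin n₂) (Fin n₂) ℂ)
      + (1 : Matrix (Fin n₁) (Fin n₁) ℂ) ⊗ₖ H₂ :=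
  factorized_evolution_implies_kronecker_sum_general n₁ n₂ H U₁ U₂ hU₁0 hU₂0 H₁ H₂ hU₁' hU₂' hfact
end

section
/- Let d₁, d₂, m, m′ ≥ 1. Let (b_k)_{1≤k≤d₁} be an orthonormal basis of ℂ^{d₁} and (b′_l)_{1≤l≤d₂} an orthonormal basis of ℂ^{d₂}. Let ε₀ ∈ ℂ^m be a unit vector, (ε_k)_{1≤k≤d₁} an orthonormal family in ℂ^m, and V a unitary on ℂ^m ⊗ ℂ^{d₁} with V(ε₀ ⊗ b_k) = ε_k ⊗ b_k for all k; similarly let ε′₀ ∈ ℂ^{m′} be a unit vector, (ε′_l) an orthonormal family in ℂ^{m′}, and V′ a unitary on ℂ^{d₂} ⊗ ℂ^{m′} with V′(b′_l ⊗ ε′₀) = b′_l ⊗ ε′_l for all l. Let ψ = Σ_{k,l} γ_{kl} · b_k ⊗ b′_l ∈ ℂ^{d₁} ⊗ ℂ^{d₂} be a unit vector, and let Φ = (V ⊗ I)(I ⊗ V′)(ε₀ ⊗ ψ ⊗ ε′₀) ∈ ℂ^m ⊗ ℂ^{d₁} ⊗ ℂ^{d₂} ⊗ ℂ^{m′} (with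 the operators acting on the indicated adjacent factors). Then the reduced density matrix of the pair, obtained by partial-tracing Φ Φ* over the two environment factors ℂ^m and ℂ^{m′}, equals Σ_{k,l} |γ_{kl}|² · (b_k ⊗ b′_l)(b_k ⊗ b′_l)*. In particular it is diagonal in the product basis (b_k ⊗ b′_l) and hence separable: after each member of an entangled pair is recorded by its own environment in a conserved basis, every possible history of the pair is a pure tensor product, so no violation of Bell's inequalities can occur. -/
/-!
Each recording unitary acts on a product vector `ε₀ ⊗ b_k` (resp. `b′_l ⊗ ε′₀`) by writing the
index into its environment, so by linearity `Φ = Σ_{k,l} γ_{kl} ε_k ⊗ b_k ⊗ b′_l ⊗ ε′_l`.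
In `Φ Φ*` the cross term of the branches `(k, l)` and `(k', l')` is weighted, after tracing out
the environments, by `⟨ε_{k'}, ε_k⟩ ⟨ε′_{l'}, ε′_l⟩ = δ_{kk'} δ_{ll'}`; only the diagonal
terms `|γ_{kl}|² (b_k ⊗ b′_l)(b_k ⊗ b′_l)*` survive.
-/

open Matrix BigOperators

/-- Partial trace of an operator on `ℂ^m ⊗ ℂ^{d₁} ⊗ ℂ^{d₂} ⊗ ℂ^{m′}` over the two
environment factors `ℂ^m` and `ℂ^{m′}`, yielding the reduced operator of the pair on
`ℂ^{d₁} ⊗ ℂ^{d₂}`. -/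
noncomputable def trEnvPair {m d₁ d₂ m' : ℕ}
    (A : Matrix (Fin m × Fin d₁ × Fin d₂ × Fin m') (Fin m × Fin d₁ × Fin d₂ × Fin m') ℂ) :
    Matrix (Fin d₁ × Fin d₂) (Fin d₁ × Fin d₂) ℂ :=
  fun u v => ∑ a : Fin m, ∑ c : Fin m', A (a, u.1, u.2, c) (a, v.1, v.2, c)

section Tensor

variable {R E A B F : Type*} [CommSemiring R]

def tensor4 (e : E → R) (x : A → R) (y : B → R) (f : F → R) : E × A × B × F → R :=
  fun p => e p.1 * x p.2.1 * y p.2.2.1 * f p.2.2.2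

def tensorId {G : Type*} [DecidableEq G] (V : Matrix (E × A) (E × A) R) :
    Matrix (E × A × G) (E × A × G) R :=
  fun p q => V (p.1, p.2.1) (q.1, q.2.1) * if p.2.2 = q.2.2 then 1 else 0

def idTensor [DecidableEq E] [DecidableEq A] (V : Matrix (B × F) (B × F) R) :
    Matrix (E × A × B × F) (E × A × B × F) R :=
  fun p q => (if p.1 = q.1 then 1 else 0) * (if p.2.1 = q.2.1 then 1 else 0) *
    V (p.2.2.1, p.2.2.2) (q.2.2.1, q.2.2.2)

theorem tensorId_mulVec_apply {G : Type*} [Fintype E] [Fintype A] [Fintype G] [DecidableEq G]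
    (V : Matrix (E × A) (E × A) R) (v : E × A × G → R) (a : E) (i : A) (g : G) :
    (tensorId V *ᵥ v) (a, i, g) = ∑ q : E × A, V (a, i) q * v (q.1, q.2, g) := by
  simp [tensorId, mulVec, dotProduct, Fintype.sum_prod_type, mul_ite, ite_mul]

theorem idTensor_mulVec_apply [Fintype E] [Fintype A] [Fintype B] [Fintype F]
    [DecidableEq E] [DecidableEq A]
    (V : Matrix (B × F) (B × F) R) (v : E × A × B × F → R) (a : E) (i : A) (j : B) (c : F) :
    (idTensor V *ᵥ v) (a, i, j, c) = ∑ q : B × F, V (j, c) q * v (a, i, q.1, q.2) := by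
  simp [idTensor, mulVec, dotProduct, Fintype.sum_prod_type, mul_ite, ite_mul]

theorem tensorId_mulVec_tensor4 [Fintype E] [Fintype A] [Fintype B] [Fintype F]
    [DecidableEq B] [DecidableEq F] {V : Matrix (E × A) (E × A) R} {e e' : E → R} {x x' : A → R}
    (h : V *ᵥ (fun p => e p.1 * x p.2) = fun p => e' p.1 * x' p.2) (y : B → R) (f : F → R) :
    tensorId V *ᵥ tensor4 e x y f = tensor4 e' x' y f := by
  funext ⟨a, i, j, c⟩
  calc (tensorId V *ᵥ tensor4 e x y f) (a, i, j, c)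
      = (V *ᵥ fun p => e p.1 * x p.2) (a, i) * (y j * f c) := by
        rw [tensorId_mulVec_apply]
        simp only [mulVec, dotProduct, Finset.sum_mul, tensor4, mul_assoc]
    _ = tensor4 e' x' y f (a, i, j, c) := by
        rw [h, tensor4]
        ring

theorem idTensor_mulVec_tensor4 [Fintype E] [Fintype A] [Fintype B] [Fintype F]
    [DecidableEq E] [DecidableEq A] {V : Matrix (B × F) (B × F) R} {y y' : B → R} {f f' : F → R}
    (h : V *ᵥ (fun q => y q.1 * f q.2) = fun q => y' q.1 * f' q.2) (e : E → R) (x : A → R) :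
    idTensor V *ᵥ tensor4 e x y f = tensor4 e x y' f' := by
  funext ⟨a, i, j, c⟩
  calc (idTensor V *ᵥ tensor4 e x y f) (a, i, j, c)
      = e a * x i * (V *ᵥ fun q => y q.1 * f q.2) (j, c) := by
        rw [idTensor_mulVec_apply]
        simp only [mulVec, dotProduct, Finset.mul_sum, tensor4]
        exact Finset.sum_congr rfl fun _ _ => by ring
    _ = tensor4 e x y' f' (a, i, j, c) := by
        rw [h, tensor4]
        ring

end Tensor

theorem trEnvPair_vecMulVec_sum_tensor4 {m d₁ d₂ m' : ℕ} {ι : Type*} [Fintype ι] [DecidableEq ι]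
    (c : ι → ℂ) (e : ι → Fin m → ℂ) (x : ι → Fin d₁ → ℂ) (y : ι → Fin d₂ → ℂ)
    (f : ι → Fin m' → ℂ)
    (hrec : ∀ i j, (star (e i) ⬝ᵥ e j) * (star (f i) ⬝ᵥ f j) = if i = j then 1 else 0) :
    trEnvPair (vecMulVec (∑ i, c i • tensor4 (e i) (x i) (y i) (f i))
        (star (∑ i, c i • tensor4 (e i) (x i) (y i) (f i))))
      = ∑ i, (c i * star (c i)) • vecMulVec (fun u => x i u.1 * y i u.2)
          (star fun u => x i u.1 * y i u.2) := by
  ext u v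
  calc trEnvPair (vecMulVec (∑ i, c i • tensor4 (e i) (x i) (y i) (f i))
        (star (∑ i, c i • tensor4 (e i) (x i) (y i) (f i)))) u v
      = ∑ p : Fin m × Fin m', ∑ i, ∑ j, c i * star (c j) *
          (x i u.1 * y i u.2 * star (x j v.1 * y j v.2)) *
          (star (e j p.1) * e i p.1 * (star (f j p.2) * f i p.2)) := by
        simp only [trEnvPair, vecMulVec_apply, Pi.star_apply, Finset.sum_apply, Pi.smul_apply,
          smul_eq_mul, tensor4, star_sum, Finset.sum_mul_sum, Fintype.sum_prod_type]
        simp only [star_mul']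
        exact Finset.sum_congr rfl fun _ _ => Finset.sum_congr rfl fun _ _ =>
          Finset.sum_congr rfl fun _ _ => Finset.sum_congr rfl fun _ _ => by ring
    _ = ∑ i, ∑ j, ∑ p : Fin m × Fin m', c i * star (c j) *
          (x i u.1 * y i u.2 * star (x j v.1 * y j v.2)) *
          (star (e j p.1) * e i p.1 * (star (f j p.2) * f i p.2)) := by
        rw [Finset.sum_comm]
        exact Finset.sum_congr rfl fun _ _ => Finset.sum_comm
    _ = ∑ i, ∑ j, c i * star (c j) * (x i u.1 * y i u.2 * star (x j v.1 * y j v.2)) *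
          ((star (e j) ⬝ᵥ e i) * (star (f j) ⬝ᵥ f i)) := by
        simp only [dotProduct, Finset.sum_mul_sum, ← Finset.mul_sum, Fintype.sum_prod_type]
        rfl
    _ = _ := by
        simp only [hrec, mul_ite, mul_one, mul_zero, Finset.sum_ite_eq', Finset.mem_univ, if_true,
          Matrix.sum_apply, Matrix.smul_apply, vecMulVec_apply, Pi.star_apply, smul_eq_mul]

theorem entangled_pair_recorded_is_separable_general (m d₁ d₂ m' : ℕ)
    -- orthonormal bases of the two systems
    (b : Fin d₁ → Fin d₁ → ℂ)
    (b' : Fin d₂ → Fin d₂ → ℂ)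
    -- first environment and its recording unitary, acting on ℂ^m ⊗ ℂ^{d₁}
    (ε₀ : Fin m → ℂ)
    (ε : Fin d₁ → Fin m → ℂ)
    (hε : ∀ k k', star (ε k) ⬝ᵥ ε k' = if k = k' then (1 : ℂ) else 0)
    (V : Matrix (Fin m × Fin d₁) (Fin m × Fin d₁) ℂ)
    (hVrec : ∀ k, V *ᵥ (fun p : Fin m × Fin d₁ => ε₀ p.1 * b k p.2)
      = fun p : Fin m × Fin d₁ => ε k p.1 * b k p.2)
    -- second environment and its recording unitary, acting on ℂ^{d₂} ⊗ ℂ^{m′}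
    (ε₀' : Fin m' → ℂ)
    (ε' : Fin d₂ → Fin m' → ℂ)
    (hε' : ∀ l l', star (ε' l) ⬝ᵥ ε' l' = if l = l' then (1 : ℂ) else 0)
    (V' : Matrix (Fin d₂ × Fin m') (Fin d₂ × Fin m') ℂ)
    (hV'rec : ∀ l, V' *ᵥ (fun q : Fin d₂ × Fin m' => b' l q.1 * ε₀' q.2)
      = fun q : Fin d₂ × Fin m' => b' l q.1 * ε' l q.2)
    -- the entangled pair state ψ = Σ γ_{kl} b_k ⊗ b′_l, a unit vector
    (γ : Fin d₁ → Fin d₂ → ℂ)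
    -- the initial total state ε₀ ⊗ ψ ⊗ ε₀′
    (ξ : Fin m × Fin d₁ × Fin d₂ × Fin m' → ℂ)
    (hξ : ξ = fun p => ε₀ p.1 * (∑ k, ∑ l, γ k l * b k p.2.1 * b' l p.2.2.1) * ε₀' p.2.2.2)
    -- V ⊗ I acting on the factors ℂ^m ⊗ ℂ^{d₁}
    (Vbig : Matrix (Fin m × Fin d₁ × Fin d₂ × Fin m') (Fin m × Fin d₁ × Fin d₂ × Fin m') ℂ)
    (hVbig : Vbig = fun p q => V (p.1, p.2.1) (q.1, q.2.1) *
      (if p.2.2 = q.2.2 then (1 : ℂ) else 0))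
    -- I ⊗ V′ acting on the factors ℂ^{d₂} ⊗ ℂ^{m′}
    (V'big : Matrix (Fin m × Fin d₁ × Fin d₂ × Fin m') (Fin m × Fin d₁ × Fin d₂ × Fin m') ℂ)
    (hV'big : V'big = fun p q => (if p.1 = q.1 then (1 : ℂ) else 0) *
      (if p.2.1 = q.2.1 then (1 : ℂ) else 0) *
      V' (p.2.2.1, p.2.2.2) (q.2.2.1, q.2.2.2))
    -- the final total state Φ = (V ⊗ I)(I ⊗ V′)(ε₀ ⊗ ψ ⊗ ε₀′)
    (Φ : Fin m × Fin d₁ × Fin d₂ × Fin m' → ℂ) (hΦ : Φ = Vbig *ᵥ (V'big *ᵥ ξ)) :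
    trEnvPair (Matrix.vecMulVec Φ (star Φ))
      = ∑ k, ∑ l, ((‖γ k l‖ : ℂ) ^ 2) •
          Matrix.vecMulVec (fun u : Fin d₁ × Fin d₂ => b k u.1 * b' l u.2)
            (star (fun u : Fin d₁ × Fin d₂ => b k u.1 * b' l u.2)) := by
  have hrec : ∀ i j : Fin d₁ × Fin d₂,
      (star (ε i.1) ⬝ᵥ ε j.1) * (star (ε' i.2) ⬝ᵥ ε' j.2) = if i = j then 1 else 0 := by
    rintro ⟨k, l⟩ ⟨k', l'⟩
    by_cases hk : k = k' <;> by_cases hl : l = l' <;> simp [hε, hε', hk, hl]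
  have hξ' : ξ = ∑ i : Fin d₁ × Fin d₂, γ i.1 i.2 • tensor4 ε₀ (b i.1) (b' i.2) ε₀' := by
    funext p
    simp only [hξ, Finset.sum_apply, Pi.smul_apply, smul_eq_mul, tensor4, Fintype.sum_prod_type,
      Finset.mul_sum, Finset.sum_mul]
    exact Finset.sum_congr rfl fun _ _ => Finset.sum_congr rfl fun _ _ => by ring
  have hΦ' : Φ = ∑ i : Fin d₁ × Fin d₂,
      γ i.1 i.2 • tensor4 (ε i.1) (b i.1) (b' i.2) (ε' i.2) := by
    rw [hΦ, show Vbig = tensorId V from hVbig, show V'big = idTensor V' from hV'big, hξ']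
    simp only [mulVec_sum, mulVec_smul, idTensor_mulVec_tensor4 (hV'rec _),
      tensorId_mulVec_tensor4 (hVrec _)]
  rw [hΦ', trEnvPair_vecMulVec_sum_tensor4 _ _ _ _ _ hrec, Fintype.sum_prod_type]
  simp only [Complex.star_def, Complex.mul_conj']

/-- After each member of an entangled pair `ψ = Σ γ_{kl} b_k ⊗ b′_l` is recorded by its
own environment in a conserved basis (via the unitaries `V` and `V′`), the reduced density
matrix of the pair is `Σ_{k,l} |γ_{kl}|² (b_k ⊗ b′_l)(b_k ⊗ b′_l)*` : it is diagonal in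
the product basis, hence separable, so no violation of Bell's inequalities can occur. -/
theorem entangled_pair_recorded_is_separable (m d₁ d₂ m' : ℕ)
    (hm : 1 ≤ m) (hd₁ : 1 ≤ d₁) (hd₂ : 1 ≤ d₂) (hm' : 1 ≤ m')
    -- orthonormal bases of the two systems
    (b : Fin d₁ → Fin d₁ → ℂ)
    (hb : ∀ k k', star (b k) ⬝ᵥ b k' = if k = k' then (1 : ℂ) else 0)
    (b' : Fin d₂ → Fin d₂ → ℂ)
    (hb' : ∀ l l', star (b' l) ⬝ᵥ b' l' = if l = l' then (1 : ℂ) else 0)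
    -- first environment and its recording unitary, acting on ℂ^m ⊗ ℂ^{d₁}
    (ε₀ : Fin m → ℂ) (hε₀ : star ε₀ ⬝ᵥ ε₀ = 1)
    (ε : Fin d₁ → Fin m → ℂ)
    (hε : ∀ k k', star (ε k) ⬝ᵥ ε k' = if k = k' then (1 : ℂ) else 0)
    (V : Matrix (Fin m × Fin d₁) (Fin m × Fin d₁) ℂ)
    (hV : V ∈ Matrix.unitaryGroup (Fin m × Fin d₁) ℂ)
    (hVrec : ∀ k, V *ᵥ (fun p : Fin m × Fin d₁ => ε₀ p.1 * b k p.2)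
      = fun p : Fin m × Fin d₁ => ε k p.1 * b k p.2)
    -- second environment and its recording unitary, acting on ℂ^{d₂} ⊗ ℂ^{m′}
    (ε₀' : Fin m' → ℂ) (hε₀' : star ε₀' ⬝ᵥ ε₀' = 1)
    (ε' : Fin d₂ → Fin m' → ℂ)
    (hε' : ∀ l l', star (ε' l) ⬝ᵥ ε' l' = if l = l' then (1 : ℂ) else 0)
    (V' : Matrix (Fin d₂ × Fin m') (Fin d₂ × Fin m') ℂ)
    (hV' : V' ∈ Matrix.unitaryGroup (Fin d₂ × Fin m') ℂ)
    (hV'rec : ∀ l, V' *ᵥ (fun q : Fin d₂ × Fin m' => b' l q.1 * ε₀' q.2)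
      = fun q : Fin d₂ × Fin m' => b' l q.1 * ε' l q.2)
    -- the entangled pair state ψ = Σ γ_{kl} b_k ⊗ b′_l, a unit vector
    (γ : Fin d₁ → Fin d₂ → ℂ) (hγ : (∑ k, ∑ l, ‖γ k l‖ ^ 2) = 1)
    -- the initial total state ε₀ ⊗ ψ ⊗ ε₀′
    (ξ : Fin m × Fin d₁ × Fin d₂ × Fin m' → ℂ)
    (hξ : ξ = fun p => ε₀ p.1 * (∑ k, ∑ l, γ k l * b k p.2.1 * b' l p.2.2.1) * ε₀' p.2.2.2)
    -- V ⊗ I acting on the factors ℂ^m ⊗ ℂ^{d₁}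
    (Vbig : Matrix (Fin m × Fin d₁ × Fin d₂ × Fin m') (Fin m × Fin d₁ × Fin d₂ × Fin m') ℂ)
    (hVbig : Vbig = fun p q => V (p.1, p.2.1) (q.1, q.2.1) *
      (if p.2.2 = q.2.2 then (1 : ℂ) else 0))
    -- I ⊗ V′ acting on the factors ℂ^{d₂} ⊗ ℂ^{m′}
    (V'big : Matrix (Fin m × Fin d₁ × Fin d₂ × Fin m') (Fin m × Fin d₁ × Fin d₂ × Fin m') ℂ)
    (hV'big : V'big = fun p q => (if p.1 = q.1 then (1 : ℂ) else 0) *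
      (if p.2.1 = q.2.1 then (1 : ℂ) else 0) *
      V' (p.2.2.1, p.2.2.2) (q.2.2.1, q.2.2.2))
    -- the final total state Φ = (V ⊗ I)(I ⊗ V′)(ε₀ ⊗ ψ ⊗ ε₀′)
    (Φ : Fin m × Fin d₁ × Fin d₂ × Fin m' → ℂ) (hΦ : Φ = Vbig *ᵥ (V'big *ᵥ ξ)) :
    trEnvPair (Matrix.vecMulVec Φ (star Φ))
      = ∑ k, ∑ l, ((‖γ k l‖ : ℂ) ^ 2) •
          Matrix.vecMulVec (fun u : Fin d₁ × Fin d₂ => b k u.1 * b' l u.2)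
            (star (fun u : Fin d₁ × Fin d₂ => b k u.1 * b' l u.2)) :=
  entangled_pair_recorded_is_separable_general m d₁ d₂ m' b b' ε₀ ε hε V hVrec ε₀' ε' hε' V' hV'rec
    γ ξ hξ Vbig hVbig V'big hV'big Φ hΦ
end
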